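/- arXiv:2506.03838 — 2 statements merged into one kernel-verified Lean document; each statement's English description precedes it below -/
import Mathlib

section
/- Let z₁ = x₁e^{iα₁}, z₂ = x₂e^{iα₂} with x₁, x₂ > 0 and α₁, α₂ ∈ ℝ. Let A = M(x₁,α₁)·E·M(x₂,α₂)·E⁻¹ and A₀ = M(x₁,0)·E·M(x₂,0)·E⁻¹, with M and E as above. Then |tr(A)| ≤ tr(A₀). -/
open Complex

noncomputable def Mmat (x α : ℝ) : Matrix (Fin 3) (Fin 3) ℂ :=
  !![0, 0, (x : ℂ); 0, Complex.exp (α * I), 0; ((x : ℂ))⁻¹, 0, 0]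

noncomputable def Emat : Matrix (Fin 3) (Fin 3) ℂ :=
  !![-1, (Real.sqrt 2 : ℝ), 1; -(Real.sqrt 2 : ℝ), 1, 0; 1, 0, 0]

/-! The trace of `M(x₁,α₁) E M(x₂,α₂) E⁻¹` is a polynomial in `e^{iα₁}, e^{iα₂}` whose coefficients
are positive reals, so the triangle inequality bounds its modulus by the value at `α₁ = α₂ = 0`. -/

lemma ofReal_sqrt_two_mul_self : ((Real.sqrt 2 : ℝ) : ℂ) * (Real.sqrt 2 : ℝ) = 2 := by
  norm_cast
  exact Real.mul_self_sqrt zero_le_two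

lemma Emat_inv :
    Emat⁻¹ = (!![0, 0, 1; 0, 1, (Real.sqrt 2 : ℝ); 1, -(Real.sqrt 2 : ℝ), -1] :
      Matrix (Fin 3) (Fin 3) ℂ) := by
  refine Matrix.inv_eq_right_inv ?_
  ext i j
  fin_cases i <;> fin_cases j <;>
    simp [Emat, Matrix.mul_apply, Fin.sum_univ_three] <;>
    linear_combination ofReal_sqrt_two_mul_self

lemma trace_Mmat_mul_Emat (x₁ x₂ α₁ α₂ : ℝ) :
    Matrix.trace (Mmat x₁ α₁ * Emat * Mmat x₂ α₂ * Emat⁻¹) =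
      ((x₁ * x₂ + x₁⁻¹ * x₂ + (x₁ * x₂)⁻¹ : ℝ) : ℂ) + exp (α₁ * I) * exp (α₂ * I) +
        ((2 * x₂ : ℝ) : ℂ) * exp (α₁ * I) + ((2 * x₁⁻¹ : ℝ) : ℂ) * exp (α₂ * I) := by
  rw [Emat_inv]
  simp [Mmat, Emat, Matrix.trace_fin_three]
  linear_combination (x₂ * exp (α₁ * I) + (x₁ : ℂ)⁻¹ * exp (α₂ * I)) * ofReal_sqrt_two_mul_self

lemma trace_Mmat_zero_mul_Emat (x₁ x₂ : ℝ) :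
    Matrix.trace (Mmat x₁ 0 * Emat * Mmat x₂ 0 * Emat⁻¹) =
      ((x₁ * x₂ + x₁⁻¹ * x₂ + (x₁ * x₂)⁻¹ + 1 + 2 * x₂ + 2 * x₁⁻¹ : ℝ) : ℂ) := by
  rw [trace_Mmat_mul_Emat]
  push_cast
  simp

lemma norm_ofReal_add_mul_add_ofReal_mul_le {a b c : ℝ} (ha : 0 ≤ a) (hb : 0 ≤ b) (hc : 0 ≤ c)
    {u v : ℂ} (hu : ‖u‖ ≤ 1) (hv : ‖v‖ ≤ 1) :
    ‖(a : ℂ) + u * v + b * u + c * v‖ ≤ a + 1 + b + c := by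
  have huv : ‖u * v‖ ≤ 1 := by
    rw [norm_mul]
    exact mul_le_one₀ hu (norm_nonneg v) hv
  have hbu : ‖(b : ℂ) * u‖ ≤ b := by
    rw [norm_mul, norm_real, Real.norm_of_nonneg hb]
    exact mul_le_of_le_one_right hb hu
  have hcv : ‖(c : ℂ) * v‖ ≤ c := by
    rw [norm_mul, norm_real, Real.norm_of_nonneg hc]
    exact mul_le_of_le_one_right hc hv
  calc ‖(a : ℂ) + u * v + b * u + c * v‖
      ≤ ‖(a : ℂ)‖ + ‖u * v‖ + ‖(b : ℂ) * u‖ + ‖(c : ℂ) * v‖ := norm_add₄_le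
    _ ≤ a + 1 + b + c := by
      rw [norm_real, Real.norm_of_nonneg ha]
      gcongr

theorem trace_dominated (x₁ x₂ α₁ α₂ : ℝ) (h₁ : 0 < x₁) (h₂ : 0 < x₂) :
    ‖Matrix.trace (Mmat x₁ α₁ * Emat * Mmat x₂ α₂ * Emat⁻¹)‖ ≤
      (Matrix.trace (Mmat x₁ 0 * Emat * Mmat x₂ 0 * Emat⁻¹)).re ∧
    (Matrix.trace (Mmat x₁ 0 * Emat * Mmat x₂ 0 * Emat⁻¹)).im = 0 := by
  rw [trace_Mmat_zero_mul_Emat, ofReal_re, ofReal_im, trace_Mmat_mul_Emat]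
  have unit_circle (α : ℝ) : ‖exp (α * I)‖ ≤ 1 := (norm_exp_ofReal_mul_I α).le
  exact ⟨norm_ofReal_add_mul_add_ofReal_mul_le (by positivity) (by positivity) (by positivity)
    (unit_circle α₁) (unit_circle α₂), rfl⟩
end

section
/- Let x₁, …, x_r > 0 and α₁, …, α_r ∈ ℝ, let P = M(x_r,α_r)·E ⋯ M(x_1,α_1)·E and P₀ = M(x_r,0)·E ⋯ M(x_1,0)·E, with M and E as above. Then the spectral radius of P equals the spectral radius of P₀, both being max(x₁⋯x_r, 1/(x₁⋯x_r)). -/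
open Complex

noncomputable def specRad (A : Matrix (Fin 3) (Fin 3) ℂ) : ℝ :=
  sSup {s : ℝ | ∃ μ : ℂ, (Matrix.charpoly A).IsRoot μ ∧ s = ‖μ‖}

/-!
Each block `M(x, α) E` is lower triangular with diagonal `(x, e^{iα}, 1/x)`. Hence so is the
product, with diagonal `(∏ x_j, e^{i ∑ α_j}, 1 / ∏ x_j)`, and the eigenvalues of a triangular
matrix are its diagonal entries. The phases only affect the middle eigenvalue, which has
modulus `1 ≤ max (∏ x_j) (1 / ∏ x_j)`.
-/

namespace Matrix

variable {m R : Type*} [Fintype m] [LinearOrder m]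

theorem IsLowerTriangular.mul_apply_self [NonUnitalNonAssocSemiring R] {A B : Matrix m m R}
    (hA : A.IsLowerTriangular) (hB : B.IsLowerTriangular) (i : m) :
    (A * B) i i = A i i * B i i := by
  rw [mul_apply, Finset.sum_eq_single i]
  · intro k _ hki
    rcases hki.lt_or_gt with hk | hk
    · rw [hB (by exact hk), mul_zero]
    · rw [hA (by exact hk), zero_mul]
  · simp

theorem IsLowerTriangular.list_prod [Semiring R] {l : List (Matrix m m R)}
    (hl : ∀ A ∈ l, A.IsLowerTriangular) : l.prod.IsLowerTriangular := by
  induction l with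
  | nil => exact blockTriangular_one
  | cons A l ih =>
    obtain ⟨hA, hl⟩ := List.forall_mem_cons.1 hl
    exact hA.mul (ih hl)

theorem IsLowerTriangular.list_prod_apply_self [Semiring R] {l : List (Matrix m m R)}
    (hl : ∀ A ∈ l, A.IsLowerTriangular) (i : m) :
    l.prod i i = (l.map fun A => A i i).prod := by
  induction l with
  | nil => exact one_apply_eq i
  | cons A l ih =>
    obtain ⟨hA, hl⟩ := List.forall_mem_cons.1 hl
    rw [List.prod_cons, hA.mul_apply_self (IsLowerTriangular.list_prod hl), ih hl,
      List.map_cons, List.prod_cons]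

theorem charpoly_of_isLowerTriangular [CommRing R] (M : Matrix m m R) (h : M.IsLowerTriangular) :
    M.charpoly = ∏ i, (Polynomial.X - Polynomial.C (M i i)) := by
  simpa using charpoly_of_isUpperTriangular Mᵀ h.transpose

theorem isRoot_charpoly_iff_of_isLowerTriangular [CommRing R] [IsDomain R] {M : Matrix m m R}
    (h : M.IsLowerTriangular) (μ : R) : M.charpoly.IsRoot μ ↔ ∃ i, M i i = μ := by
  rw [charpoly_of_isLowerTriangular M h, Polynomial.IsRoot, Polynomial.eval_prod,
    Finset.prod_eq_zero_iff]
  simp [sub_eq_zero, eq_comm]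

end Matrix

theorem specRad_of_isLowerTriangular {A : Matrix (Fin 3) (Fin 3) ℂ} (h : A.IsLowerTriangular) :
    specRad A = sSup (Set.range fun i => ‖A i i‖) := by
  unfold specRad
  congr 1
  ext s
  simp only [Set.mem_ofPred_eq, Set.mem_range, Matrix.isRoot_charpoly_iff_of_isLowerTriangular h]
  constructor
  · rintro ⟨μ, ⟨i, rfl⟩, rfl⟩
    exact ⟨i, rfl⟩
  · rintro ⟨i, rfl⟩
    exact ⟨_, ⟨i, rfl⟩, rfl⟩

theorem Real.sSup_self_one_inv {a : ℝ} (ha : 0 < a) : sSup {a, 1, a⁻¹} = max a a⁻¹ := by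
  have h1 : 1 ≤ max a a⁻¹ := by
    rcases le_total 1 a with h | h
    · exact le_max_of_le_left h
    · exact le_max_of_le_right ((one_le_inv₀ ha).2 h)
  refine IsGreatest.csSup_eq ⟨?_, ?_⟩
  · rcases max_choice a a⁻¹ with h | h <;> simp [h]
  · rintro s (rfl | rfl | rfl) <;> simp [h1]

theorem Mmat_mul_Emat (x α : ℝ) : Mmat x α * Emat =
    !![(x : ℂ), 0, 0;
       -(Real.sqrt 2 : ℂ) * exp (α * I), exp (α * I), 0;
       -(x : ℂ)⁻¹, (Real.sqrt 2 : ℂ) * (x : ℂ)⁻¹, (x : ℂ)⁻¹] := by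
  ext i j
  fin_cases i <;> fin_cases j <;> simp [Mmat, Emat] <;> ring

theorem isLowerTriangular_Mmat_mul_Emat (x α : ℝ) : (Mmat x α * Emat).IsLowerTriangular := by
  intro i j hij
  rw [Mmat_mul_Emat]
  fin_cases i <;> fin_cases j <;> first | rfl | exact absurd hij (by decide)

theorem norm_diag_Mmat_mul_Emat {x : ℝ} (hx : 0 < x) (α : ℝ) :
    (fun i => ‖(Mmat x α * Emat) i i‖) = ![x, 1, x⁻¹] := by
  ext i
  fin_cases i <;> simp [Mmat_mul_Emat, norm_exp, abs_of_pos hx]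

theorem specRad_ofFn_prod_Mmat_mul_Emat {r : ℕ} (x α : Fin r → ℝ) (hx : ∀ j, 0 < x j) :
    specRad (List.ofFn fun j => Mmat (x j) (α j) * Emat).prod =
      max (∏ j, x j) (∏ j, x j)⁻¹ := by
  have hblocks : ∀ A ∈ List.ofFn fun j => Mmat (x j) (α j) * Emat, A.IsLowerTriangular := by
    simp [List.mem_ofFn, isLowerTriangular_Mmat_mul_Emat]
  have hdiag : (fun i => ‖(List.ofFn fun j => Mmat (x j) (α j) * Emat).prod i i‖) =
      ![∏ j, x j, 1, (∏ j, x j)⁻¹] := by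
    ext i
    simp only [Matrix.IsLowerTriangular.list_prod_apply_self hblocks, List.map_ofFn,
      List.prod_ofFn, norm_prod, Function.comp_apply,
      fun j => congrFun (norm_diag_Mmat_mul_Emat (hx j) (α j)) i]
    fin_cases i <;> simp [Finset.prod_inv_distrib]
  rw [specRad_of_isLowerTriangular (Matrix.IsLowerTriangular.list_prod hblocks), hdiag]
  simp only [Matrix.range_cons, Matrix.range_empty, Set.union_empty, Set.singleton_union]
  exact Real.sSup_self_one_inv (Finset.prod_pos fun j _ => hx j)

theorem specRad_peripheral_preserved (r : ℕ) (x α : Fin r → ℝ) (hx : ∀ j, 0 < x j) :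
    let P : Matrix (Fin 3) (Fin 3) ℂ :=
      (List.ofFn fun j : Fin r => Mmat (x j.rev) (α j.rev) * Emat).prod
    let P₀ : Matrix (Fin 3) (Fin 3) ℂ :=
      (List.ofFn fun j : Fin r => Mmat (x j.rev) 0 * Emat).prod
    specRad P = specRad P₀ ∧ specRad P = max (∏ j, x j) (∏ j, x j)⁻¹ := by
  have hspec (β : Fin r → ℝ) :
      specRad (List.ofFn fun j => Mmat (x j.rev) (β j.rev) * Emat).prod =
        max (∏ j, x j) (∏ j, x j)⁻¹ := by
    rw [specRad_ofFn_prod_Mmat_mul_Emat _ _ fun j => hx j.rev,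
      Fintype.prod_equiv Fin.revPerm (fun j => x j.rev) x fun _ => rfl]
  exact ⟨(hspec α).trans (hspec 0).symm, hspec α⟩
end
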